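/- arXiv:2301.00477 — 3 statements merged into one kernel-verified Lean document; each statement's English description precedes it below -/
import Mathlib

section
/- Let H ∈ ℝ^{n×n} be symmetric with uᵀHu ≥ ζ‖u‖² for all u in the null space of J ∈ ℝ^{m×n}, where ζ > 0. Suppose (d̄, ȳ) and (d, y) satisfy Hd̄ + Jᵀȳ = -ḡ, Jd̄ = -c and Hd + Jᵀy = -g, Jd = -c for gradient vectors ḡ, g ∈ ℝⁿ and a common c ∈ ℝᵐ. Then ‖d̄ - d‖ ≤ ζ⁻¹ ‖ḡ - g‖. -/
/-!
Both steps solve KKT systems with the same constraint right-hand side, so `u = d̄ - d` lies in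
`Null(J)`. Subtracting the stationarity equations gives `H u = (g - ḡ) - Jᵀ(ȳ - y)`, and the
multiplier term is orthogonal to `u`. Hence `ζ ‖u‖² ≤ ⟪u, H u⟫ = ⟪u, g - ḡ⟫ ≤ ‖u‖ ‖ḡ - g‖` by
Cauchy–Schwarz.
-/

open scoped RealInnerProductSpace
open ContinuousLinearMap

theorem norm_le_inv_mul_norm_of_mul_sq_le_inner {E : Type*} [NormedAddCommGroup E]
    [InnerProductSpace ℝ E] {ζ : ℝ} (hζ : 0 < ζ) {u v : E} (h : ζ * ‖u‖ ^ 2 ≤ ⟪u, v⟫) :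
    ‖u‖ ≤ ζ⁻¹ * ‖v‖ := by
  have hcs : ζ * ‖u‖ ^ 2 ≤ ‖u‖ * ‖v‖ := h.trans (real_inner_le_norm u v)
  rcases (norm_nonneg u).eq_or_lt with hu | hu
  · rw [← hu]
    positivity
  · rw [inv_mul_eq_div, le_div_iff₀ hζ]
    nlinarith

section KKT

variable {E F : Type*} [NormedAddCommGroup E] [InnerProductSpace ℝ E] [CompleteSpace E]
  [NormedAddCommGroup F] [InnerProductSpace ℝ F] [CompleteSpace F]

theorem inner_adjoint_eq_zero_of_apply_eq_zero (J : E →L[ℝ] F) {u : E} (hu : J u = 0) (y : F) :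
    ⟪u, adjoint J y⟫ = 0 := by
  rw [adjoint_inner_right, hu, inner_zero_left]

theorem inner_sub_apply_sub_of_kkt (H : E →L[ℝ] E) (J : E →L[ℝ] F) {gbar g dbar d : E}
    {ybar y : F} (h1bar : H dbar + adjoint J ybar = -gbar) (h1 : H d + adjoint J y = -g)
    (hJ : J (dbar - d) = 0) :
    ⟪dbar - d, H (dbar - d)⟫ = ⟪dbar - d, g - gbar⟫ := by
  have hH : H (dbar - d) = (g - gbar) - adjoint J (ybar - y) := by
    rw [map_sub, map_sub, eq_sub_of_add_eq h1bar, eq_sub_of_add_eq h1]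
    abel
  rw [hH, inner_sub_right, inner_adjoint_eq_zero_of_apply_eq_zero J hJ, sub_zero]

end KKT

theorem stmt3_general {n m : ℕ}
    (H : EuclideanSpace ℝ (Fin n) →L[ℝ] EuclideanSpace ℝ (Fin n))
    (J : EuclideanSpace ℝ (Fin n) →L[ℝ] EuclideanSpace ℝ (Fin m))
    (ζ : ℝ) (hζ : 0 < ζ)
    (hpos : ∀ u, J u = 0 → ζ * ‖u‖ ^ 2 ≤ ⟪u, H u⟫)
    (gbar g dbar d : EuclideanSpace ℝ (Fin n)) (c ybar y : EuclideanSpace ℝ (Fin m))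
    (h1bar : H dbar + adjoint J ybar = -gbar) (h2bar : J dbar = -c)
    (h1 : H d + adjoint J y = -g) (h2 : J d = -c) :
    ‖dbar - d‖ ≤ ζ⁻¹ * ‖gbar - g‖ := by
  have hJ : J (dbar - d) = 0 := by rw [map_sub, h2bar, h2, sub_self]
  rw [norm_sub_rev gbar g]
  apply norm_le_inv_mul_norm_of_mul_sq_le_inner hζ
  calc ζ * ‖dbar - d‖ ^ 2 ≤ ⟪dbar - d, H (dbar - d)⟫ := hpos _ hJ
    _ = ⟪dbar - d, g - gbar⟫ := inner_sub_apply_sub_of_kkt H J h1bar h1 hJ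

/-- If `H` is symmetric and satisfies `⟪u, H u⟫ ≥ ζ ‖u‖²` on `Null(J)` with `ζ > 0`, and
`(d̄, ȳ)`, `(d, y)` solve the KKT systems with gradients `ḡ`, `g` and common `c`, then
`‖d̄ - d‖ ≤ ζ⁻¹ ‖ḡ - g‖`. -/
theorem stmt3 {n m : ℕ}
    (H : EuclideanSpace ℝ (Fin n) →L[ℝ] EuclideanSpace ℝ (Fin n))
    (J : EuclideanSpace ℝ (Fin n) →L[ℝ] EuclideanSpace ℝ (Fin m))
    (hsymm : ∀ u v, ⟪H u, v⟫ = ⟪u, H v⟫)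
    (ζ : ℝ) (hζ : 0 < ζ)
    (hpos : ∀ u, J u = 0 → ζ * ‖u‖ ^ 2 ≤ ⟪u, H u⟫)
    (gbar g dbar d : EuclideanSpace ℝ (Fin n)) (c ybar y : EuclideanSpace ℝ (Fin m))
    (h1bar : H dbar + adjoint J ybar = -gbar) (h2bar : J dbar = -c)
    (h1 : H d + adjoint J y = -g) (h2 : J d = -c) :
    ‖dbar - d‖ ≤ ζ⁻¹ * ‖gbar - g‖ :=
  stmt3_general H J ζ hζ hpos gbar g dbar d c ybar y h1bar h2bar h1 h2
end

section
/- Let φ(x, τ) = τ f(x) + ‖c(x)‖₁ where ∇f is L-Lipschitz and each ∇c_i is γ_i-Lipschitz with Γ = Σγ_i. Suppose d ∈ ℝⁿ satisfies c(x) + ∇c(x)ᵀd = 0 (linearized feasibility), let g ∈ ℝⁿ, τ > 0, α ∈ (0,1], and Δl = -τ gᵀd + ‖c(x)‖₁. Then φ(x + αd, τ) - φ(x, τ) ≤ -α Δl + α τ (∇f(x) - g)ᵀd + (τL + Γ)/2 · α² ‖d‖². -/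
/-!
A gradient that is `L`-Lipschitz makes the first-order Taylor model exact up to
`L/2 ‖y - x‖²`. Applied to `f` this is the usual descent bound. Applied to each constraint
`cᵢ`, linearized feasibility makes the model along `α d` equal to `(1 - α) cᵢ(x)`. So
`|cᵢ(x + α d)| ≤ (1 - α) |cᵢ(x)| + γᵢ/2 α² ‖d‖²`, and summing these bounds with `τ` times
the bound for `f` gives the estimate.
-/

open scoped RealInnerProductSpace NNReal

section LipschitzGradient

variable {E : Type*} [NormedAddCommGroup E] [InnerProductSpace ℝ E] [CompleteSpace E]

theorem HasGradientAt.hasDerivAt_comp_add_smul {f : E → ℝ} {f' x d : E} {t : ℝ}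
    (hf : HasGradientAt f f' (x + t • d)) :
    HasDerivAt (fun s : ℝ => f (x + s • d)) ⟪f', d⟫ t := by
  have hline : HasDerivAt (fun s : ℝ => x + s • d) d t := by
    simpa using ((hasDerivAt_id t).smul_const d).const_add x
  have h := hf.hasFDerivAt.comp_hasDerivAt t hline
  simp only [InnerProductSpace.toDual_apply_apply] at h
  exact h

variable {f : E → ℝ} {f' : E → E} {L : ℝ≥0}

theorem abs_sub_sub_inner_le_of_lipschitzWith_gradient
    (hf : ∀ x, HasGradientAt f (f' x) x) (hL : LipschitzWith L f') (x y : E) :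
    |f y - f x - ⟪f' x, y - x⟫| ≤ L / 2 * ‖y - x‖ ^ 2 := by
  set d := y - x
  have hderiv : ∀ t : ℝ, HasDerivAt (fun t => f (x + t • d) - f x - t * ⟪f' x, d⟫)
      (⟪f' (x + t • d), d⟫ - ⟪f' x, d⟫) t := fun t =>
    (((hf _).hasDerivAt_comp_add_smul).sub_const _).sub
      (by simpa using (hasDerivAt_id t).mul_const _)
  have hbound : ∀ t ∈ Set.Ico (0 : ℝ) 1,
      ‖⟪f' (x + t • d), d⟫ - ⟪f' x, d⟫‖ ≤ L * t * ‖d‖ ^ 2 := by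
    rintro t ⟨ht, -⟩
    calc ‖⟪f' (x + t • d), d⟫ - ⟪f' x, d⟫‖ = |⟪f' (x + t • d) - f' x, d⟫| := by
          rw [inner_sub_left, Real.norm_eq_abs]
      _ ≤ ‖f' (x + t • d) - f' x‖ * ‖d‖ := abs_real_inner_le_norm _ _
      _ ≤ L * ‖t • d‖ * ‖d‖ := by
          gcongr
          simpa [dist_eq_norm] using hL.dist_le_mul (x + t • d) x
      _ = L * t * ‖d‖ ^ 2 := by rw [norm_smul, Real.norm_of_nonneg ht]; ring
  have hB : ∀ t : ℝ, HasDerivAt (fun t => L / 2 * t ^ 2 * ‖d‖ ^ 2) (L * t * ‖d‖ ^ 2) t :=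
    fun t => (((hasDerivAt_pow 2 t).const_mul (L / 2 : ℝ)).mul_const _).congr_deriv (by ring)
  simpa [d] using image_norm_le_of_norm_deriv_right_le_deriv_boundary
    (fun t _ => (hderiv t).continuousAt.continuousWithinAt)
    (fun t _ => (hderiv t).hasDerivWithinAt) (by simp) hB hbound
    (Set.right_mem_Icc.2 zero_le_one)

theorem abs_comp_add_smul_sub_sub_le_of_lipschitzWith_gradient
    (hf : ∀ x, HasGradientAt f (f' x) x) (hL : LipschitzWith L f') (x d : E) (t : ℝ) :
    |f (x + t • d) - f x - t * ⟪f' x, d⟫| ≤ L / 2 * t ^ 2 * ‖d‖ ^ 2 := by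
  have h := abs_sub_sub_inner_le_of_lipschitzWith_gradient hf hL x (x + t • d)
  rwa [add_sub_cancel_left, inner_smul_right, norm_smul, mul_pow, Real.norm_eq_abs, sq_abs,
    ← mul_assoc] at h

theorem abs_comp_add_smul_le_of_linearization_eq_zero
    (hf : ∀ x, HasGradientAt f (f' x) x) (hL : LipschitzWith L f') {x d : E}
    (hlin : f x + ⟪f' x, d⟫ = 0) {α : ℝ} (hα : α ∈ Set.Icc (0 : ℝ) 1) :
    |f (x + α • d)| ≤ (1 - α) * |f x| + L / 2 * α ^ 2 * ‖d‖ ^ 2 := by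
  have hmodel : f x + α * ⟪f' x, d⟫ = (1 - α) * f x := by linear_combination α * hlin
  calc |f (x + α • d)|
      ≤ |f x + α * ⟪f' x, d⟫| + |f (x + α • d) - f x - α * ⟪f' x, d⟫| := by
        simpa using abs_add_le (f x + α * ⟪f' x, d⟫) (f (x + α • d) - f x - α * ⟪f' x, d⟫)
    _ ≤ (1 - α) * |f x| + L / 2 * α ^ 2 * ‖d‖ ^ 2 := by
        rw [hmodel, abs_mul, abs_of_nonneg (sub_nonneg.2 hα.2)]
        gcongr
        exact abs_comp_add_smul_sub_sub_le_of_lipschitzWith_gradient hf hL x d α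

end LipschitzGradient

/-- Merit function decrease: with `φ(x,τ) = τ f(x) + ‖c(x)‖₁`, `∇f` `L`-Lipschitz, each `∇c_i`
`γ_i`-Lipschitz, `Γ = ∑ γ_i`, and `d` satisfying linearized feasibility `c(x) + ∇c(x)ᵀd = 0`,
for `α ∈ (0,1]` and `Δl = -τ gᵀd + ‖c(x)‖₁`:
`φ(x+αd,τ) - φ(x,τ) ≤ -α Δl + α τ (∇f(x)-g)ᵀd + (τL+Γ)/2 α² ‖d‖²`. -/
theorem stmt8 {n m : ℕ} (f : EuclideanSpace ℝ (Fin n) → ℝ)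
    (fgrad : EuclideanSpace ℝ (Fin n) → EuclideanSpace ℝ (Fin n))
    (L : NNReal) (hfgrad : ∀ x, HasGradientAt f (fgrad x) x)
    (hfLip : LipschitzWith L fgrad)
    (c : EuclideanSpace ℝ (Fin n) → Fin m → ℝ)
    (gc : Fin m → EuclideanSpace ℝ (Fin n) → EuclideanSpace ℝ (Fin n))
    (γ : Fin m → NNReal)
    (hcgrad : ∀ i x, HasGradientAt (fun z => c z i) (gc i x) x)
    (hcLip : ∀ i, LipschitzWith (γ i) (gc i))
    (x d g : EuclideanSpace ℝ (Fin n)) (τ α : ℝ) (hτ : 0 < τ)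
    (hα : α ∈ Set.Ioc (0 : ℝ) 1)
    (hlin : ∀ i, c x i + ⟪gc i x, d⟫ = 0) :
    (τ * f (x + α • d) + ∑ i, |c (x + α • d) i|) - (τ * f x + ∑ i, |c x i|) ≤
      -α * (-τ * ⟪g, d⟫ + ∑ i, |c x i|) + α * τ * ⟪fgrad x - g, d⟫ +
        (τ * (L : ℝ) + ∑ i, (γ i : ℝ)) / 2 * α ^ 2 * ‖d‖ ^ 2 := by
  have hf := (abs_le.1
    (abs_comp_add_smul_sub_sub_le_of_lipschitzWith_gradient hfgrad hfLip x d α)).2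
  have hc : ∑ i, |c (x + α • d) i|
      ≤ (1 - α) * ∑ i, |c x i| + (∑ i, (γ i : ℝ)) / 2 * α ^ 2 * ‖d‖ ^ 2 :=
    calc ∑ i, |c (x + α • d) i|
        ≤ ∑ i, ((1 - α) * |c x i| + γ i / 2 * α ^ 2 * ‖d‖ ^ 2) :=
          Finset.sum_le_sum fun i _ => abs_comp_add_smul_le_of_linearization_eq_zero
            (hcgrad i) (hcLip i) (hlin i) (Set.Ioc_subset_Icc_self hα)
      _ = _ := by
          simp only [Finset.sum_add_distrib, ← Finset.mul_sum, ← Finset.sum_mul, ← Finset.sum_div]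
  rw [inner_sub_left]
  linear_combination τ * hf + hc
end

section
/- Suppose (d, y) solves Hd + Jᵀy = -g, Jd = -c, with H symmetric, ‖H‖ ≤ κ_H, ‖y‖ ≤ κ_y, and suppose Δl := -τ gᵀd + ‖c‖₁ ≥ κ_l τ (‖d‖² + ‖c‖₁) for constants τ, κ_l > 0. Then, writing g = -(Hd + Jᵀy), one has τ|gᵀd| ≤ τ(|dᵀHd| + |yᵀJd|) ≤ τ(κ_H‖d‖² + κ_y‖c‖₁) ≤ (max{κ_H, κ_y}/κ_l) Δl. -/
open scoped RealInnerProductSpace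
open ContinuousLinearMap

lemma norm_le_sum_abs' {m : ℕ} (c : EuclideanSpace ℝ (Fin m)) : ‖c‖ ≤ ∑ i, |c i| := by
  rw [EuclideanSpace.norm_eq]
  simp only [Real.norm_eq_abs, sq_abs]
  have h : ∑ i, c i ^ 2 ≤ (∑ i, |c i|) ^ 2 := by
    calc ∑ i, c i ^ 2 = ∑ i, |c i| * |c i| := by simp [sq_abs, sq]
      _ ≤ ∑ i, |c i| * ∑ j, |c j| := by
          refine Finset.sum_le_sum fun i _ => ?_
          exact mul_le_mul_of_nonneg_left
            (Finset.single_le_sum (fun j _ => abs_nonneg (c j)) (Finset.mem_univ i))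
            (abs_nonneg _)
      _ = (∑ i, |c i|) ^ 2 := by rw [← Finset.sum_mul, sq]
  calc Real.sqrt (∑ i, c i ^ 2) ≤ Real.sqrt ((∑ i, |c i|) ^ 2) := Real.sqrt_le_sqrt h
    _ = ∑ i, |c i| := Real.sqrt_sq (Finset.sum_nonneg fun i _ => abs_nonneg _)

/-- If `(d, y)` solves `Hd + Jᵀy = -g`, `Jd = -c`, with `‖H‖ ≤ κ_H`, `‖y‖ ≤ κ_y`, and the model
reduction `Δl = -τ gᵀd + ‖c‖₁` satisfies `Δl ≥ κ_l τ (‖d‖² + ‖c‖₁)`, then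
`τ|gᵀd| ≤ τ(|dᵀHd| + |yᵀJd|) ≤ τ(κ_H ‖d‖² + κ_y ‖c‖₁) ≤ (max{κ_H, κ_y}/κ_l) Δl`. -/
theorem stmt17 {n m : ℕ}
    (H : EuclideanSpace ℝ (Fin n) →L[ℝ] EuclideanSpace ℝ (Fin n))
    (J : EuclideanSpace ℝ (Fin n) →L[ℝ] EuclideanSpace ℝ (Fin m))
    (hsymm : ∀ u v, ⟪H u, v⟫ = ⟪u, H v⟫)
    (g d : EuclideanSpace ℝ (Fin n)) (y c : EuclideanSpace ℝ (Fin m))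
    (κH κy κl τ : ℝ) (hκl : 0 < κl) (hτ : 0 < τ)
    (hH : ‖H‖ ≤ κH) (hy : ‖y‖ ≤ κy)
    (h1 : H d + adjoint J y = -g) (h2 : J d = -c)
    (hΔl : -τ * ⟪g, d⟫ + ∑ i, |c i| ≥ κl * τ * (‖d‖ ^ 2 + ∑ i, |c i|)) :
    τ * |⟪g, d⟫| ≤ τ * (|⟪d, H d⟫| + |⟪y, J d⟫|) ∧
    τ * (|⟪d, H d⟫| + |⟪y, J d⟫|) ≤ τ * (κH * ‖d‖ ^ 2 + κy * ∑ i, |c i|) ∧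
    τ * (κH * ‖d‖ ^ 2 + κy * ∑ i, |c i|) ≤
      (max κH κy / κl) * (-τ * ⟪g, d⟫ + ∑ i, |c i|) := by
  have hS : (0:ℝ) ≤ ∑ i, |c i| := Finset.sum_nonneg fun i _ => abs_nonneg _
  have hcS : ‖c‖ ≤ ∑ i, |c i| := norm_le_sum_abs' c
  have hκH : 0 ≤ κH := le_trans (norm_nonneg _) hH
  have hκy : 0 ≤ κy := le_trans (norm_nonneg _) hy
  have hg : ⟪g, d⟫ = -(⟪d, H d⟫ + ⟪y, J d⟫) := by
    have : g = -(H d + adjoint J y) := by rw [h1, neg_neg]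
    rw [this, inner_neg_left, inner_add_left, hsymm, real_inner_comm (H d) d,
      ← adjoint_inner_left J, real_inner_comm]
  have e1 : |⟪g, d⟫| ≤ |⟪d, H d⟫| + |⟪y, J d⟫| := by
    rw [hg, abs_neg]; exact abs_add_le _ _
  have e2a : |⟪d, H d⟫| ≤ κH * ‖d‖ ^ 2 := by
    calc |⟪d, H d⟫| ≤ ‖d‖ * ‖H d‖ := abs_real_inner_le_norm _ _
      _ ≤ ‖d‖ * (‖H‖ * ‖d‖) := by
          exact mul_le_mul_of_nonneg_left (H.le_opNorm d) (norm_nonneg d)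
      _ ≤ ‖d‖ * (κH * ‖d‖) := by
          have := mul_le_mul_of_nonneg_right hH (norm_nonneg d)
          exact mul_le_mul_of_nonneg_left this (norm_nonneg d)
      _ = κH * ‖d‖ ^ 2 := by ring
  have e2b : |⟪y, J d⟫| ≤ κy * ∑ i, |c i| := by
    calc |⟪y, J d⟫| ≤ ‖y‖ * ‖J d‖ := abs_real_inner_le_norm _ _
      _ = ‖y‖ * ‖c‖ := by rw [h2, norm_neg]
      _ ≤ κy * ∑ i, |c i| := mul_le_mul hy hcS (norm_nonneg _) hκy
  refine ⟨by nlinarith, by nlinarith, ?_⟩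
  have hmax : κH * ‖d‖ ^ 2 + κy * ∑ i, |c i| ≤ max κH κy * (‖d‖ ^ 2 + ∑ i, |c i|) := by
    have h1' : κH * ‖d‖ ^ 2 ≤ max κH κy * ‖d‖ ^ 2 :=
      mul_le_mul_of_nonneg_right (le_max_left _ _) (sq_nonneg _)
    have h2' : κy * ∑ i, |c i| ≤ max κH κy * ∑ i, |c i| :=
      mul_le_mul_of_nonneg_right (le_max_right _ _) hS
    linarith [mul_add (max κH κy) (‖d‖ ^ 2) (∑ i, |c i|)]
  have hmax0 : 0 ≤ max κH κy := le_trans hκH (le_max_left _ _)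
  have key : κl * τ * (‖d‖ ^ 2 + ∑ i, |c i|) ≤ -τ * ⟪g, d⟫ + ∑ i, |c i| := hΔl
  calc τ * (κH * ‖d‖ ^ 2 + κy * ∑ i, |c i|)
      ≤ τ * (max κH κy * (‖d‖ ^ 2 + ∑ i, |c i|)) :=
        mul_le_mul_of_nonneg_left hmax hτ.le
    _ = (max κH κy / κl) * (κl * τ * (‖d‖ ^ 2 + ∑ i, |c i|)) := by
        field_simp
    _ ≤ (max κH κy / κl) * (-τ * ⟪g, d⟫ + ∑ i, |c i|) :=
        mul_le_mul_of_nonneg_left key (div_nonneg hmax0 hκl.le)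
end
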